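/- Let q be a prime power and G = AGL_1(F_q) ⊂ GL_2(F_q) the group of matrices (a b; 0 1) with a ≠ 0. For any g ≥ 1, the number of 2g-tuples (A_1,B_1,…,A_g,B_g) ∈ G^{2g} with ∏_{i=1}^g [A_i,B_i] = 1 equals q^{2g−1}(q−1)^{2g} + q^{2g−1}(q−1). -/

import Mathlib

/-!
Writing `A = (a b; 0 1)` as the affine map `x ↦ a x + b`, the commutator of `(a, b)` and
`(c, d)` is the translation by `d (a - 1) + b (1 - c)`, and translations compose by adding. So
`∏ [Aᵢ, Bᵢ] = 1` says that for the fixed linear parts `(aᵢ, cᵢ)` the translation parts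
`(bᵢ, dᵢ) ∈ F^{2g}` lie in the kernel of a linear form, which vanishes identically only when
every `aᵢ = cᵢ = 1`. Summing `q^{2g}` over that one choice and `q^{2g-1}` over the other
`(q - 1)^{2g} - 1` choices gives the count.
-/

open Matrix Module
open scoped commutatorElement

theorem Module.Dual.natCard_ker_of_ne_zero {K V : Type*} [Field K] [AddCommGroup V] [Module K V]
    [Module.Finite K V] {f : Module.Dual K V} (hf : f ≠ 0) :
    Nat.card (LinearMap.ker f) = Nat.card K ^ (finrank K V - 1) := by
  rw [natCard_eq_pow_finrank (K := K), ← finrank_ker_add_one_of_ne_zero hf, Nat.add_sub_cancel]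

section AffineMatrix

variable {F : Type*} [Field F]

def affineMatrix (a : Fˣ) (b : F) : GL (Fin 2) F :=
  GeneralLinearGroup.mkOfDetNeZero !![(a : F), b; 0, 1] (by simp [det_fin_two])

@[simp] lemma coe_affineMatrix (a : Fˣ) (b : F) :
    (affineMatrix a b : Matrix (Fin 2) (Fin 2) F) = !![(a : F), b; 0, 1] := rfl

lemma affineMatrix_mul (a c : Fˣ) (b d : F) :
    affineMatrix a b * affineMatrix c d = affineMatrix (a * c) (a * d + b) := by
  ext i j
  fin_cases i <;> fin_cases j <;> simp

@[simp] lemma affineMatrix_one_zero : affineMatrix (1 : Fˣ) (0 : F) = 1 := by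
  ext i j
  fin_cases i <;> fin_cases j <;> simp

lemma affineMatrix_inj {a c : Fˣ} {b d : F} :
    affineMatrix a b = affineMatrix c d ↔ a = c ∧ b = d := by
  refine ⟨fun h => ⟨Units.ext ?_, ?_⟩, fun ⟨hac, hbd⟩ => hac ▸ hbd ▸ rfl⟩
  · simpa using congrArg (fun u : GL (Fin 2) F => (u : Matrix (Fin 2) (Fin 2) F) 0 0) h
  · simpa using congrArg (fun u : GL (Fin 2) F => (u : Matrix (Fin 2) (Fin 2) F) 0 1) h

lemma commutatorElement_affineMatrix (a c : Fˣ) (b d : F) :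
    ⁅affineMatrix a b, affineMatrix c d⁆ = affineMatrix 1 (d * (a - 1) + b * (1 - c)) := by
  rw [commutatorElement_def, mul_inv_eq_iff_eq_mul, mul_inv_eq_iff_eq_mul]
  simp only [affineMatrix_mul, one_mul, mul_comm c a, affineMatrix_inj, true_and,
    Units.val_one]
  ring

lemma prod_ofFn_affineMatrix_one {n : ℕ} (t : Fin n → F) :
    (List.ofFn fun i => affineMatrix 1 (t i)).prod = affineMatrix 1 (∑ i, t i) := by
  induction n with
  | zero => simp
  | succ n ih =>
    rw [List.ofFn_succ, List.prod_cons, ih, affineMatrix_mul, Fin.sum_univ_succ]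
    simp [add_comm]

def affineMatrixEquiv :
    Fˣ × F ≃ {u : GL (Fin 2) F //
      (u : Matrix (Fin 2) (Fin 2) F) 1 0 = 0 ∧ (u : Matrix (Fin 2) (Fin 2) F) 1 1 = 1} where
  toFun x := ⟨affineMatrix x.1 x.2, by simp⟩
  invFun u := (Units.mk0 ((u.1 : Matrix (Fin 2) (Fin 2) F) 0 0) (by
      intro h
      simpa [det_fin_two, h, u.2.1] using u.1.det_ne_zero), (u.1 : Matrix (Fin 2) (Fin 2) F) 0 1)
  left_inv x := by ext <;> simp
  right_inv u := by
    obtain ⟨u, h10, h11⟩ := u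
    ext i j
    fin_cases i <;> fin_cases j <;> simp [h10, h11]

end AffineMatrix

section CommutatorForm

variable {F : Type*} [Field F] {ι : Type*} [Fintype ι]

/-- With `Aᵢ = affineMatrix aᵢ bᵢ`, `Bᵢ = affineMatrix cᵢ dᵢ`, `ac i = (aᵢ, cᵢ)` and
`bd i = (bᵢ, dᵢ)`, the product `∏ [Aᵢ, Bᵢ]` is the translation by `commutatorForm ac bd`.
-/
def commutatorForm (ac : ι → Fˣ × Fˣ) : Module.Dual F (ι → F × F) :=
  ∑ i, ((((ac i).1 : F) - 1) • (LinearMap.snd F F F ∘ₗ LinearMap.proj i) +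
    (1 - ((ac i).2 : F)) • (LinearMap.fst F F F ∘ₗ LinearMap.proj i))

@[simp] lemma commutatorForm_apply (ac : ι → Fˣ × Fˣ) (bd : ι → F × F) :
    commutatorForm ac bd = ∑ i, ((bd i).2 * ((ac i).1 - 1) + (bd i).1 * (1 - (ac i).2)) := by
  simp [commutatorForm, mul_comm]

lemma commutatorForm_eq_zero_iff {ac : ι → Fˣ × Fˣ} : commutatorForm ac = 0 ↔ ac = 1 := by
  classical
  refine ⟨fun h => funext fun i => ?_, fun h => LinearMap.ext fun bd => by simp [h]⟩
  have ha := LinearMap.congr_fun h (Pi.single i (0, 1))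
  have hc := LinearMap.congr_fun h (Pi.single i (1, 0))
  simp [Pi.single_apply, apply_ite, ite_mul, sub_eq_zero] at ha hc
  exact Prod.ext ha (Units.ext hc.symm)

lemma card_commutatorForm_eq_zero [Fintype F] :
    Nat.card {w : (ι → Fˣ × Fˣ) × (ι → F × F) // commutatorForm w.1 w.2 = 0} =
      Fintype.card F ^ (2 * Fintype.card ι) +
        ((Fintype.card F - 1) ^ (2 * Fintype.card ι) - 1) *
          Fintype.card F ^ (2 * Fintype.card ι - 1) := by
  classical
  have hdim : finrank F (ι → F × F) = 2 * Fintype.card ι := by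
    simp [finrank_pi_fintype, mul_comm]
  have hcard : (Finset.univ.erase (1 : ι → Fˣ × Fˣ)).card =
      (Fintype.card F - 1) ^ (2 * Fintype.card ι) - 1 := by
    rw [Finset.card_erase_of_mem (Finset.mem_univ _), Finset.card_univ, Fintype.card_fun,
      Fintype.card_prod, Fintype.card_units, ← pow_two, ← pow_mul, mul_comm 2]
  calc Nat.card {w : (ι → Fˣ × Fˣ) × (ι → F × F) // commutatorForm w.1 w.2 = 0}
      = ∑ ac, Nat.card (LinearMap.ker (commutatorForm ac)) := by
        rw [Nat.card_congr (Equiv.subtypeProdEquivSigmaSubtype fun ac bd =>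
          commutatorForm ac bd = 0), Nat.card_sigma]
        rfl
    _ = Nat.card (LinearMap.ker (commutatorForm (1 : ι → Fˣ × Fˣ))) +
          ∑ ac ∈ Finset.univ.erase 1, Nat.card (LinearMap.ker (commutatorForm ac)) :=
        (Finset.add_sum_erase _ _ (Finset.mem_univ _)).symm
    _ = _ := by
        rw [commutatorForm_eq_zero_iff.mpr rfl, LinearMap.ker_zero,
          Nat.card_congr Submodule.topEquiv.toEquiv, natCard_eq_pow_finrank (K := F),
          Finset.sum_congr rfl fun ac hac => Module.Dual.natCard_ker_of_ne_zero
            (commutatorForm_eq_zero_iff.not.mpr (Finset.ne_of_mem_erase hac)),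
          Finset.sum_const, hcard, smul_eq_mul, hdim, Nat.card_eq_fintype_card]

end CommutatorForm

lemma card_commutator_relation_eq_card_commutatorForm {F : Type*} [Field F] (g : ℕ) :
    Nat.card {v : Fin g → GL (Fin 2) F × GL (Fin 2) F //
        (∀ i, ((v i).1 : Matrix (Fin 2) (Fin 2) F) 1 0 = 0 ∧
              ((v i).1 : Matrix (Fin 2) (Fin 2) F) 1 1 = 1 ∧
              ((v i).2 : Matrix (Fin 2) (Fin 2) F) 1 0 = 0 ∧
              ((v i).2 : Matrix (Fin 2) (Fin 2) F) 1 1 = 1) ∧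
        (List.ofFn fun i => ⁅(v i).1, (v i).2⁆).prod = 1} =
      Nat.card {w : (Fin g → Fˣ × Fˣ) × (Fin g → F × F) //
        commutatorForm w.1 w.2 = 0} := by
  let e : (Fin g → Fˣ × Fˣ) × (Fin g → F × F) ≃
      {v : Fin g → GL (Fin 2) F × GL (Fin 2) F //
        ∀ i, ((v i).1 : Matrix (Fin 2) (Fin 2) F) 1 0 = 0 ∧
              ((v i).1 : Matrix (Fin 2) (Fin 2) F) 1 1 = 1 ∧
              ((v i).2 : Matrix (Fin 2) (Fin 2) F) 1 0 = 0 ∧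
              ((v i).2 : Matrix (Fin 2) (Fin 2) F) 1 1 = 1} :=
    (Equiv.arrowProdEquivProdArrow _ _ _).symm.trans <|
      (Equiv.piCongrRight fun _ => (Equiv.prodProdProdComm _ _ _ _).trans <|
        (affineMatrixEquiv.prodCongr affineMatrixEquiv).trans
          Equiv.subtypeProdEquivProd.symm).trans <|
      Equiv.subtypePiEquivPi.symm.trans <|
        Equiv.subtypeEquivRight fun _ => forall_congr' fun _ => and_assoc
  have he : ∀ w i, (e w).1 i =
      (affineMatrix (w.1 i).1 (w.2 i).1, affineMatrix (w.1 i).2 (w.2 i).2) :=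
    fun _ _ => rfl
  refine Nat.card_congr ((Equiv.subtypeSubtypeEquivSubtypeInter _ _).symm.trans
    (Equiv.subtypeEquiv e fun w => ?_).symm)
  simp only [he, commutatorElement_affineMatrix, prod_ofFn_affineMatrix_one,
    ← affineMatrix_one_zero, affineMatrix_inj, true_and, commutatorForm_apply]

/-- Let `F` be a finite field with `q` elements and `G = AGL₁(F_q) ⊂ GL₂(F_q)` the
group of matrices `(a b; 0 1)` with `a ≠ 0`. For any `g ≥ 1`, the number of
`2g`-tuples `(A₁,B₁,…,A_g,B_g) ∈ G^{2g}` with `∏ᵢ [Aᵢ,Bᵢ] = 1` equals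
`q^{2g−1}(q−1)^{2g} + q^{2g−1}(q−1)`. -/
theorem card_representation_variety_AGL1
    (F : Type*) [Field F] [Fintype F] (q g : ℕ) (hq : Fintype.card F = q)
    (hg : 1 ≤ g) :
    Nat.card {v : Fin g → GL (Fin 2) F × GL (Fin 2) F //
        (∀ i, ((v i).1 : Matrix (Fin 2) (Fin 2) F) 1 0 = 0 ∧
              ((v i).1 : Matrix (Fin 2) (Fin 2) F) 1 1 = 1 ∧
              ((v i).2 : Matrix (Fin 2) (Fin 2) F) 1 0 = 0 ∧
              ((v i).2 : Matrix (Fin 2) (Fin 2) F) 1 1 = 1) ∧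
        (List.ofFn fun i => ⁅(v i).1, (v i).2⁆).prod = 1}
      = q ^ (2 * g - 1) * (q - 1) ^ (2 * g) + q ^ (2 * g - 1) * (q - 1) := by
  rw [card_commutator_relation_eq_card_commutatorForm, card_commutatorForm_eq_zero,
    Fintype.card_fin, hq]
  have hq2 : 2 ≤ q := hq ▸ Fintype.one_lt_card
  obtain ⟨m, hm⟩ : ∃ m, 2 * g = m + 1 := ⟨2 * g - 1, by omega⟩
  have hpow : 1 ≤ (q - 1) ^ (m + 1) := Nat.one_le_pow _ _ (by omega)
  rw [hm, Nat.add_sub_cancel]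
  zify [hpow, (by omega : 1 ≤ q)]
  ring
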